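/- For the four-qubit tetrahedron state |Ψ₄⟩ = √(1/3)|S_{4,0}⟩ + √(2/3)|S_{4,3}⟩, the maximal overlap with symmetric product states is max_σ |⟨Ψ₄|σ^{⊗4}⟩|² = 1/3, so E_G(|Ψ₄⟩) = log₂ 3; the maximum is attained at |σ⟩ = |0⟩ (among others). -/

import Mathlib

open Finset

noncomputable def overlap {n : ℕ} (f g : (Fin n → Fin 2) → ℂ) : ℂ :=
  ∑ x : Fin n → Fin 2, (starRingEnd ℂ) (f x) * g x

noncomputable def symmPow (n : ℕ) (σ : Fin 2 → ℂ) : (Fin n → Fin 2) → ℂ :=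
  fun x => ∏ i, σ (x i)

noncomputable def prodState {n : ℕ} (σ : Fin n → Fin 2 → ℂ) : (Fin n → Fin 2) → ℂ :=
  fun x => ∏ j, σ j (x j)

def qubitUnit (σ : Fin 2 → ℂ) : Prop :=
  ‖σ 0‖ ^ 2 + ‖σ 1‖ ^ 2 = 1

noncomputable def dicke (n k : ℕ) : (Fin n → Fin 2) → ℂ :=
  fun x => if (∑ i, ((x i : ℕ))) = k then ((1 / Real.sqrt (n.choose k) : ℝ) : ℂ) else 0

noncomputable def bloch (θ ph : ℝ) : Fin 2 → ℂ :=
  fun i => if i = 0 then ((Real.cos (θ/2) : ℝ) : ℂ)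
           else Complex.exp (Complex.I * ph) * ((Real.sin (θ/2) : ℝ) : ℂ)

def isCPP (n : ℕ) (ψ : (Fin n → Fin 2) → ℂ) (σ : Fin 2 → ℂ) : Prop :=
  qubitUnit σ ∧ ∀ τ, qubitUnit τ →
    ‖overlap (symmPow n τ) ψ‖ ≤ ‖overlap (symmPow n σ) ψ‖

noncomputable def tetrahedronState : (Fin 4 → Fin 2) → ℂ :=
  fun x => ((Real.sqrt (1/3) : ℝ) : ℂ) * dicke 4 0 x + ((Real.sqrt (2/3) : ℝ) : ℂ) * dicke 4 3 x

noncomputable def e0' : Fin 2 → ℂ := fun i => if i = 0 then 1 else 0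

/-! Writing σ = (a, b), expansion over the computational basis gives
⟨σ^{⊗4}|Ψ₄⟩ = √(1/3) (ā⁴ + 2√2 ā b̄³). Its modulus is at most √(1/3) (|a|⁴ + 2√2 |a| |b|³), and
(|a|² + |b|²)² − |a|⁴ − 2√2 |a| |b|³ = |b|² (√2 |a| − |b|)² ≥ 0, so the squared overlap of a unit
σ is at most 1/3, with equality at σ = |0⟩. -/

open ComplexConjugate

theorem Fin.sum_univ_pi_succ {α M : Type*} [Fintype α] [AddCommMonoid M] {n : ℕ}
    (f : (Fin (n + 1) → α) → M) : ∑ x, f x = ∑ a, ∑ x : Fin n → α, f (Matrix.vecCons a x) :=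
  (Fintype.sum_equiv (Fin.consEquiv fun _ => α) _ _ fun _ => rfl).symm.trans
    (Fintype.sum_prod_type _)

theorem pow_four_add_two_mul_sqrt_two_mul_le (x y : ℝ) :
    x ^ 4 + 2 * √2 * x * y ^ 3 ≤ (x ^ 2 + y ^ 2) ^ 2 := by
  have h2 : √2 ^ 2 = 2 := Real.sq_sqrt zero_le_two
  linear_combination sq_nonneg (y * (√2 * x - y)) + x ^ 2 * y ^ 2 * h2

theorem overlap_symmPow_tetrahedronState (σ : Fin 2 → ℂ) :
    overlap (symmPow 4 σ) tetrahedronState =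
      (√(1 / 3) : ℂ) * (conj (σ 0) ^ 4 + 2 * √2 * conj (σ 0) * conj (σ 1) ^ 3) := by
  have h4 : √4 = 2 := by
    rw [show (4 : ℝ) = 2 ^ 2 by norm_num, Real.sqrt_sq zero_le_two]
  simp only [overlap, Fin.sum_univ_pi_succ, Fintype.sum_unique, symmPow, tetrahedronState, dicke,
    Fin.prod_univ_four, Fin.sum_univ_four, Fin.sum_univ_two, Matrix.cons_val_zero,
    Matrix.cons_val_one, Matrix.cons_val_two, Matrix.cons_val_three, Matrix.head_cons,
    Matrix.tail_cons]
  norm_num [h4]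
  ring

theorem norm_overlap_symmPow_tetrahedronState_le (σ : Fin 2 → ℂ) :
    ‖overlap (symmPow 4 σ) tetrahedronState‖ ≤ √(1 / 3) * (‖σ 0‖ ^ 2 + ‖σ 1‖ ^ 2) ^ 2 := by
  rw [overlap_symmPow_tetrahedronState, norm_mul, Complex.norm_real,
    Real.norm_of_nonneg (by positivity)]
  gcongr
  calc _ ≤ ‖conj (σ 0) ^ 4‖ + ‖2 * (√2 : ℂ) * conj (σ 0) * conj (σ 1) ^ 3‖ := norm_add_le _ _
    _ = ‖σ 0‖ ^ 4 + 2 * √2 * ‖σ 0‖ * ‖σ 1‖ ^ 3 := by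
      simp [Complex.norm_real, Real.norm_of_nonneg (Real.sqrt_nonneg 2)]
    _ ≤ _ := pow_four_add_two_mul_sqrt_two_mul_le _ _

theorem norm_overlap_symmPow_tetrahedronState_sq_le {σ : Fin 2 → ℂ} (hσ : qubitUnit σ) :
    ‖overlap (symmPow 4 σ) tetrahedronState‖ ^ 2 ≤ 1 / 3 := by
  have h := norm_overlap_symmPow_tetrahedronState_le σ
  rw [hσ, one_pow, mul_one] at h
  calc _ ≤ √(1 / 3) ^ 2 := by gcongr
    _ = 1 / 3 := Real.sq_sqrt (by norm_num)

theorem qubitUnit_e0' : qubitUnit e0' := by simp [qubitUnit, e0']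

theorem norm_overlap_symmPow_e0'_tetrahedronState_sq :
    ‖overlap (symmPow 4 e0') tetrahedronState‖ ^ 2 = 1 / 3 := by
  simp [overlap_symmPow_tetrahedronState, e0']

theorem tetrahedron_state_geometric_measure :
    (∀ σ : Fin 2 → ℂ, qubitUnit σ →
      ‖overlap (symmPow 4 σ) tetrahedronState‖ ^ 2 ≤ 1 / 3) ∧
    ‖overlap (symmPow 4 e0') tetrahedronState‖ ^ 2 = 1 / 3 ∧
    - Real.logb 2 (sSup {a : ℝ | ∃ σ : Fin 2 → ℂ, qubitUnit σ ∧
        a = ‖overlap (symmPow 4 σ) tetrahedronState‖ ^ 2})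
      = Real.logb 2 3 := by
  have hmax : IsGreatest {a : ℝ | ∃ σ : Fin 2 → ℂ, qubitUnit σ ∧
      a = ‖overlap (symmPow 4 σ) tetrahedronState‖ ^ 2} (1 / 3) :=
    ⟨⟨e0', qubitUnit_e0', norm_overlap_symmPow_e0'_tetrahedronState_sq.symm⟩,
      by rintro _ ⟨σ, hσ, rfl⟩; exact norm_overlap_symmPow_tetrahedronState_sq_le hσ⟩
  refine ⟨fun σ hσ => norm_overlap_symmPow_tetrahedronState_sq_le hσ,
    norm_overlap_symmPow_e0'_tetrahedronState_sq, ?_⟩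
  rw [hmax.csSup_eq, one_div, Real.logb_inv, neg_neg]
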